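/- arXiv:2506.05270 — 5 statements merged into one kernel-verified Lean document; each statement's English description precedes it below -/
import Mathlib

section
/- (Calibration in one dimension.) Let θ ∈ [0,1) and set α_θ := 2^{2−θ}/(1−θ). Assume there exists a function F : ℝ² → ℝ satisfying: (i) F(2j+1, 2j) − F(2j−1, 2j) = 2 for every j ∈ ℤ; (ii) F(2j−1, 2j) − F(2j−1, 2j−2) = 4/(1−θ) for every j ∈ ℤ; (iii) F(x₂, z) − F(x₁, z) ≤ (x₂−z)³ − (x₁−z)³ for all x₁ ≤ x₂ and all z ∈ ℝ; (iv) F(x, z₂) − F(x, z₁) ≤ (2^{2−θ}/(1−θ))·|z₂−z₁|^θ for all x ∈ ℝ and all z₁, z₂ ∈ ℝ. Then the canonical staircase S(x) = 2⌊(x+1)/2⌋, together with all its oblique translations x ↦ S(x−τ₀)+τ₀ with τ₀ ∈ [−1,1], is an entire local minimizer of the functional JF_{θ,α_θ,3,1}. -/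
open MeasureTheory Set Filter Topology

/-- The canonical staircase `S(x) = 2⌊(x+1)/2⌋`. -/
noncomputable def stairS (x : ℝ) : ℝ := 2 * (⌊(x + 1) / 2⌋ : ℤ)

/-- The canonical `(H,V)`-staircase. -/
noncomputable def stairHV (H V x : ℝ) : ℝ := V * stairS (x / H)

/-- A pure-jump structure on `u : ℝ → ℝ`, witnessing that `u ∈ PJ_loc(ℝ)`:
a countable jump set `S`, a jump function `J` (nonzero exactly on `S`),
such that on every bounded open interval the jumps are absolutely summable and
`u` is represented as a constant plus the sum of the jumps to the left. -/
structure PJloc (u : ℝ → ℝ) where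
  S : Set ℝ
  J : ℝ → ℝ
  countable : S.Countable
  J_ne : ∀ x ∈ S, J x ≠ 0
  J_zero : ∀ x ∉ S, J x = 0
  summable_loc : ∀ a b : ℝ, a < b →
    Summable (fun y : ↥(S ∩ Set.Ioo a b) => |J y.1|)
  repr : ∀ a b : ℝ, a < b → ∃ c : ℝ,
    ∀ x ∈ Set.Ioo a b,
      u x = c + ∑' y : {y : ℝ // y ∈ S ∩ Set.Ioo a b ∧ y ≤ x}, J y.1

/-- The jump functional with fidelity term
`JF_{θ,α,β,M}(Ω,u) = α ∑_{x ∈ S_u ∩ Ω} |u⁺-u⁻|^θ + β ∫_Ω (u - Mx)² dx`. -/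
noncomputable def JF (θ α β M : ℝ) (Ω : Set ℝ) (u : ℝ → ℝ) (P : PJloc u) : ENNReal :=
  ENNReal.ofReal α * (∑' x : ↥(P.S ∩ Ω), ENNReal.ofReal (|P.J x.1| ^ θ)) +
  ENNReal.ofReal β * ∫⁻ x in Ω, ENNReal.ofReal ((u x - M * x) ^ 2)

/-- `u` (with pure-jump structure `Pu`) is an entire local minimizer of `JF_{θ,α,β,M}`:
for every open `Ω ⊆ ℝ` and every pure-jump competitor `v` coinciding with `u`
outside a compact subset of `Ω`, the value on `u` does not exceed the value on `v`. -/
def EntireLocalMin (θ α β M : ℝ) (u : ℝ → ℝ) (Pu : PJloc u) : Prop :=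
  ∀ Ω : Set ℝ, IsOpen Ω →
    ∀ (v : ℝ → ℝ) (Pv : PJloc v),
      (∃ K : Set ℝ, IsCompact K ∧ K ⊆ Ω ∧ ∀ x ∉ K, v x = u x) →
      JF θ α β M Ω u Pu ≤ JF θ α β M Ω v Pv

/-!
The staircase is calibrated by `F̃(x, z) = F(x - τ₀, z - τ₀)`. A competitor `w` agrees with `v`
off a compact `K`; enclose `K` in an interval `(a, b)` whose ends are jump points of `v`, so that
`w` is constant near `a` and near `b`. Walking along the graph of `w`, (iii) bounds the increment
of `F̃` on each step by the fidelity term and (iv) bounds it across each jump by the jump cost.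
Summing (by induction for finitely many jumps, by truncation otherwise, which needs `θ > 0`; for
`θ = 0` infinitely many jumps cost `∞`) gives `F̃(b, w(b⁻)) - F̃(a, w(a⁺)) ≤ JF((a, b), w)`. For the
staircase, (i) and (ii) make this an equality, and since `v = w` off `K` the energies on `Ω`
compare as they do on `(a, b)`.
-/

open scoped ENNReal

section SummableIndicator

variable {ι : Type*} {g : ι → ℝ}

lemma abs_tsum_indicator_le (hg : Summable fun i => |g i|) (A : Set ι) :
    |∑' i, A.indicator g i| ≤ ∑' i, |g i| := by
  rw [← Real.norm_eq_abs]
  exact tsum_of_norm_bounded hg.hasSum fun i => by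
    by_cases hi : i ∈ A <;> simp [hi]

lemma abs_tsum_indicator_sub_sum_le (hg : Summable fun i => |g i|) (A : Set ι) (s : Finset ι) :
    |∑' i, A.indicator g i - ∑ i ∈ s, A.indicator g i| ≤ ∑' i : {i // i ∉ s}, |g i| := by
  have hA : Summable (A.indicator g) := hg.of_abs.indicator A
  rw [← hA.sum_add_tsum_subtype_compl s, add_sub_cancel_left, ← Real.norm_eq_abs]
  exact tsum_of_norm_bounded (f := fun i : {i // i ∉ s} => A.indicator g i)
    (hg.subtype {i | i ∉ s}).hasSum fun i => by
      by_cases hi : (i : ι) ∈ A <;> simp [hi]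

end SummableIndicator

section Cumulative

variable {g : ℝ → ℝ}

lemma tendsto_tsum_indicator_Iic_nhdsLT (hg : Summable fun y => |g y|) (x₀ : ℝ) :
    Tendsto (fun x => ∑' y, (Iic x).indicator g y) (𝓝[<] x₀)
      (𝓝 (∑' y, (Iio x₀).indicator g y)) := by
  refine tendsto_tsum_of_dominated_convergence hg (fun y => ?_)
    (Eventually.of_forall fun x y => by by_cases hy : y ∈ Iic x <;> simp [hy])
  rcases lt_or_ge y x₀ with hy | hy
  · refine tendsto_const_nhds.congr' ?_
    filter_upwards [Ioo_mem_nhdsLT hy] with x hx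
    simp [hy, hx.1.le]
  · refine tendsto_const_nhds.congr' ?_
    filter_upwards [self_mem_nhdsWithin] with x (hx : x < x₀)
    simp [not_lt.2 hy, not_le.2 (hx.trans_le hy)]

lemma tsum_indicator_Iic_eq (hg : Summable g) (x₀ : ℝ) :
    ∑' y, (Iic x₀).indicator g y = ∑' y, (Iio x₀).indicator g y + g x₀ := by
  rw [(hg.indicator _).tsum_eq_add_tsum_ite x₀, add_comm]
  congr 2
  · ext y
    by_cases h : y = x₀ <;> simp [h, Set.indicator_apply, le_iff_lt_or_eq]
  · simp

end Cumulative

namespace PJloc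

variable {w : ℝ → ℝ} (P : PJloc w)

lemma mem_S_iff {x : ℝ} : x ∈ P.S ↔ P.J x ≠ 0 :=
  ⟨P.J_ne x, fun h => Classical.byContradiction fun hx => h (P.J_zero x hx)⟩

lemma support_indicator_J (a b : ℝ) :
    Function.support ((Ioo a b).indicator P.J) = P.S ∩ Ioo a b := by
  ext x
  by_cases hx : x ∈ Ioo a b <;> simp [hx, P.mem_S_iff]

lemma summable_abs_indicator_J {a b : ℝ} (hab : a < b) :
    Summable fun y => |(Ioo a b).indicator P.J y| := by
  have h := summable_subtype_iff_indicator (f := fun y => |P.J y|) (s := P.S ∩ Ioo a b) |>.1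
    (P.summable_loc a b hab)
  refine h.congr fun y => ?_
  by_cases hy : y ∈ Ioo a b
  · by_cases hS : y ∈ P.S <;> simp [hy, hS, P.J_zero]
  · simp [hy]

lemma exists_eq_add_tsum_indicator {a b : ℝ} (hab : a < b) :
    ∃ c, ∀ x ∈ Ioo a b, w x = c + ∑' y, (Iic x).indicator ((Ioo a b).indicator P.J) y := by
  obtain ⟨c, hc⟩ := P.repr a b hab
  refine ⟨c, fun x hx => ?_⟩
  rw [hc x hx]
  refine congrArg (c + ·) ((tsum_subtype {y | y ∈ P.S ∩ Ioo a b ∧ y ≤ x} P.J).trans ?_)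
  congr 1 with y
  by_cases hS : y ∈ P.S
  · by_cases hy : y ∈ Ioo a b <;> by_cases hyx : y ≤ x <;>
      simp [hS, hy, hyx, -Set.mem_Ioo]
  · simp [Set.indicator_apply, P.J_zero y hS]

lemma tendsto_nhdsLT (x₀ : ℝ) : Tendsto w (𝓝[<] x₀) (𝓝 (w x₀ - P.J x₀)) := by
  have hI : x₀ ∈ Ioo (x₀ - 1) (x₀ + 1) := ⟨by linarith, by linarith⟩
  obtain ⟨c, hc⟩ := P.exists_eq_add_tsum_indicator (a := x₀ - 1) (b := x₀ + 1) (by linarith)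
  have hg := P.summable_abs_indicator_J (a := x₀ - 1) (b := x₀ + 1) (by linarith)
  have hlim : w x₀ - P.J x₀ =
      c + ∑' y, (Iio x₀).indicator ((Ioo (x₀ - 1) (x₀ + 1)).indicator P.J) y := by
    rw [hc x₀ hI, tsum_indicator_Iic_eq hg.of_abs, Set.indicator_of_mem hI]
    ring
  rw [hlim]
  refine ((tendsto_tsum_indicator_Iic_nhdsLT hg x₀).const_add c).congr' ?_
  filter_upwards [Ioo_mem_nhdsLT (show x₀ - 1 < x₀ by linarith)] with x hx
  exact (hc x ⟨hx.1, hx.2.trans hI.2⟩).symm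

lemma J_eq_sub_of_tendsto {x₀ L : ℝ} (h : Tendsto w (𝓝[<] x₀) (𝓝 L)) : P.J x₀ = w x₀ - L := by
  have := tendsto_nhds_unique h (P.tendsto_nhdsLT x₀)
  linarith

lemma J_eq_sub_of_eqOn {x₀ l z : ℝ} (hl : l < x₀) (h : EqOn w (fun _ => z) (Ioo l x₀)) :
    P.J x₀ = w x₀ - z :=
  P.J_eq_sub_of_tendsto <| tendsto_const_nhds.congr' <|
    eventuallyEq_of_mem (Ioo_mem_nhdsLT hl) fun _ hx => (h hx).symm

lemma J_eq_of_eventuallyEq {w' : ℝ → ℝ} (P' : PJloc w') {x₀ : ℝ} (h : w =ᶠ[𝓝 x₀] w') :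
    P.J x₀ = P'.J x₀ := by
  have hlim := (P'.tendsto_nhdsLT x₀).congr' (nhdsWithin_le_nhds h.symm)
  rw [P.J_eq_sub_of_tendsto hlim, h.eq_of_nhds]
  ring

end PJloc

section JF

variable {θ α β M : ℝ} {u w : ℝ → ℝ} (Pu : PJloc u) (Pw : PJloc w)

lemma JF_union {A B : Set ℝ} (hAB : Disjoint A B) (hB : MeasurableSet B) :
    JF θ α β M (A ∪ B) u Pu = JF θ α β M A u Pu + JF θ α β M B u Pu := by
  simp only [JF]
  rw [Set.inter_union_distrib_left,
    ENNReal.summable.tsum_union_disjoint (f := fun x => ENNReal.ofReal (|Pu.J x| ^ θ))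
      (hAB.mono inter_subset_right inter_subset_right) ENNReal.summable,
    lintegral_union hB hAB]
  ring

lemma JF_mono {A B : Set ℝ} (h : A ⊆ B) : JF θ α β M A u Pu ≤ JF θ α β M B u Pu := by
  unfold JF
  gcongr
  exact ENNReal.tsum_mono_subtype (fun x => ENNReal.ofReal (|Pu.J x| ^ θ))
    (inter_subset_inter_right _ h)

lemma JF_congr {A : Set ℝ} (hA : MeasurableSet A) (hJ : ∀ x ∈ A, Pu.J x = Pw.J x)
    (heq : ∀ x ∈ A, u x = w x) : JF θ α β M A u Pu = JF θ α β M A w Pw := by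
  have hS : Pu.S ∩ A = Pw.S ∩ A := by
    ext x
    simp only [mem_inter_iff, Pu.mem_S_iff, Pw.mem_S_iff]
    exact ⟨fun h => ⟨hJ x h.2 ▸ h.1, h.2⟩, fun h => ⟨(hJ x h.2).symm ▸ h.1, h.2⟩⟩
  unfold JF
  rw [setLIntegral_congr_fun hA fun x hx => by rw [heq x hx], hS]
  congr 2
  exact tsum_congr fun x => by rw [hJ x x.2.2]

lemma JF_le_of_le_of_eq_off {Ω I K : Set ℝ} (hΩ : MeasurableSet Ω) (hI : MeasurableSet I)
    (hK : IsClosed K) (hKΩ : K ⊆ Ω) (hKI : K ⊆ I) (hle : JF θ α β M I u Pu ≤ JF θ α β M I w Pw)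
    (hfin : JF θ α β M I u Pu ≠ ⊤) (heq : ∀ x ∉ K, u x = w x) :
    JF θ α β M Ω u Pu ≤ JF θ α β M Ω w Pw := by
  have hJ : ∀ x ∉ K, Pu.J x = Pw.J x := fun x hx => Pu.J_eq_of_eventuallyEq Pw <|
    eventuallyEq_of_mem (hK.isOpen_compl.mem_nhds hx) heq
  have hsplit : ∀ (v : ℝ → ℝ) (Pv : PJloc v), JF θ α β M Ω v Pv + JF θ α β M (I \ Ω) v Pv =
      JF θ α β M I v Pv + JF θ α β M (Ω \ I) v Pv := by
    intro v Pv
    have hΩ' := JF_union (θ := θ) (α := α) (β := β) (M := M) Pv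
      disjoint_sdiff_inter.symm (hΩ.diff hI)
    have hI' := JF_union (θ := θ) (α := α) (β := β) (M := M) Pv
      disjoint_sdiff_inter.symm (hI.diff hΩ)
    rw [inter_union_sdiff] at hΩ' hI'
    rw [hΩ', hI', inter_comm]
    ring
  have hoff : ∀ {A : Set ℝ}, MeasurableSet A → Disjoint A K →
      JF θ α β M A u Pu = JF θ α β M A w Pw := fun hA hAK =>
    JF_congr Pu Pw hA (fun x hx => hJ x (hAK.notMem_of_mem_left hx))
      (fun x hx => heq x (hAK.notMem_of_mem_left hx))
  have hfin' : JF θ α β M (I \ Ω) u Pu ≠ ⊤ := ne_top_of_le_ne_top hfin (JF_mono Pu sdiff_subset)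
  rw [← ENNReal.add_le_add_iff_right hfin', hsplit, hoff (hI.diff hΩ) ?_, hsplit,
    hoff (hΩ.diff hI) ?_]
  · exact add_le_add_left hle _
  · exact disjoint_left.2 fun x hx hK => hx.2 (hKI hK)
  · exact disjoint_left.2 fun x hx hK => hx.2 (hKΩ hK)

lemma JF_one_eq (hβ : 0 ≤ β) (A : Set ℝ) :
    JF θ α β 1 A u Pu = ENNReal.ofReal α * (∑' x : ↥(Pu.S ∩ A), ENNReal.ofReal (|Pu.J x| ^ θ)) +
      ∫⁻ x in A, ENNReal.ofReal (β * (u x - x) ^ 2) := by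
  rw [JF, ← lintegral_const_mul' _ _ ENNReal.ofReal_ne_top]
  simp only [one_mul, ← ENNReal.ofReal_mul hβ]

end JF

section Calibration

variable {F : ℝ → ℝ → ℝ} {θ α : ℝ}

lemma lintegral_Ioo_add_lintegral_Ioo (f : ℝ → ℝ≥0∞) {a b c : ℝ} (hab : a ≤ b) (hbc : b ≤ c) :
    (∫⁻ x in Ioo a b, f x) + ∫⁻ x in Ioo b c, f x = ∫⁻ x in Ioo a c, f x := by
  rw [setLIntegral_congr Ioo_ae_eq_Ioc, setLIntegral_congr Ioo_ae_eq_Ioc,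
    setLIntegral_congr Ioo_ae_eq_Ioc, ← Ioc_union_Ioc_eq_Ioc hab hbc,
    lintegral_union measurableSet_Ioc (Ioc_disjoint_Ioc_of_le le_rfl)]

lemma lintegral_Ioo_ofReal_three_mul_sq (z : ℝ) {s t : ℝ} (hst : s ≤ t) :
    ∫⁻ x in Ioo s t, ENNReal.ofReal (3 * (x - z) ^ 2) =
      ENNReal.ofReal ((t - z) ^ 3 - (s - z) ^ 3) := by
  rw [setLIntegral_congr Ioo_ae_eq_Ioc, ← ofReal_integral_eq_lintegral_ofReal
    (by fun_prop : Continuous fun x : ℝ => 3 * (x - z) ^ 2).integrableOn_Ioc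
    (ae_of_all _ fun x => by positivity), ← intervalIntegral.integral_of_le hst,
    intervalIntegral.integral_const_mul,
    intervalIntegral.integral_comp_sub_right (fun x => x ^ 2), integral_pow]
  ring_nf

lemma ofReal_sub_le_lintegral_sq
    (h3 : ∀ x₁ x₂ z : ℝ, x₁ ≤ x₂ → F x₂ z - F x₁ z ≤ (x₂ - z) ^ 3 - (x₁ - z) ^ 3)
    (z : ℝ) {s t : ℝ} (hst : s ≤ t) :
    ENNReal.ofReal (F t z - F s z) ≤ ∫⁻ x in Ioo s t, ENNReal.ofReal (3 * (x - z) ^ 2) := by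
  rw [lintegral_Ioo_ofReal_three_mul_sq z hst]
  exact ENNReal.ofReal_le_ofReal (h3 s t z hst)

/-- Induction on `s`, peeling off the rightmost jump: (iii) bounds the last step, (iv) the jump. -/
lemma ofReal_sub_le_of_finset
    (h3 : ∀ x₁ x₂ z : ℝ, x₁ ≤ x₂ → F x₂ z - F x₁ z ≤ (x₂ - z) ^ 3 - (x₁ - z) ^ 3)
    (h4 : ∀ x z₁ z₂ : ℝ, F x z₂ - F x z₁ ≤ α * |z₂ - z₁| ^ θ) (hα : 0 ≤ α)
    (g : ℝ → ℝ) (a za : ℝ) (s : Finset ℝ) {y : ℝ} (hay : a ≤ y) (hs : ∀ t ∈ s, t ∈ Ioo a y) :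
    ENNReal.ofReal (F y (za + ∑ t ∈ s, g t) - F a za) ≤
      ENNReal.ofReal α * (∑ t ∈ s, ENNReal.ofReal (|g t| ^ θ)) +
      ∫⁻ x in Ioo a y, ENNReal.ofReal (3 * (x - (za + ∑ t ∈ s, (Iic x).indicator g t)) ^ 2) := by
  induction s using Finset.induction_on_max generalizing y with
  | empty =>
    simpa using ofReal_sub_le_lintegral_sq h3 za hay
  | insert m s hsm ih =>
    have hm : m ∈ Ioo a y := hs m (Finset.mem_insert_self m s)
    have hms : m ∉ s := fun h => lt_irrefl m (hsm m h)
    set z₀ := za + ∑ t ∈ s, g t with hz₀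
    have hleft : ∀ x ∈ Ioo a m, za + ∑ t ∈ insert m s, (Iic x).indicator g t =
        za + ∑ t ∈ s, (Iic x).indicator g t := fun x hx => by
      rw [Finset.sum_insert hms, indicator_of_notMem (show m ∉ Iic x from not_le.2 hx.2) g,
        zero_add]
    have hright : ∀ x ∈ Ioo m y, za + ∑ t ∈ insert m s, (Iic x).indicator g t = z₀ + g m :=
      fun x hx => by
        rw [Finset.sum_insert hms, indicator_of_mem (show m ∈ Iic x from hx.1.le) g, hz₀,
          Finset.sum_congr rfl fun t ht => indicator_of_mem
            (show t ∈ Iic x from (hsm t ht).le.trans hx.1.le) g]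
        ring
    have hinit : ENNReal.ofReal (F m z₀ - F a za) ≤
        ENNReal.ofReal α * (∑ t ∈ s, ENNReal.ofReal (|g t| ^ θ)) + ∫⁻ x in Ioo a m,
          ENNReal.ofReal (3 * (x - (za + ∑ t ∈ insert m s, (Iic x).indicator g t)) ^ 2) := by
      rw [setLIntegral_congr_fun measurableSet_Ioo fun x hx => by rw [hleft x hx]]
      exact ih hm.1.le fun t ht => ⟨(hs t (Finset.mem_insert_of_mem ht)).1, hsm t ht⟩
    have hjump : ENNReal.ofReal (F m (z₀ + g m) - F m z₀) ≤
        ENNReal.ofReal α * ENNReal.ofReal (|g m| ^ θ) := by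
      rw [← ENNReal.ofReal_mul hα]
      exact ENNReal.ofReal_le_ofReal (by simpa using h4 m z₀ (z₀ + g m))
    have hlast : ENNReal.ofReal (F y (z₀ + g m) - F m (z₀ + g m)) ≤ ∫⁻ x in Ioo m y,
        ENNReal.ofReal (3 * (x - (za + ∑ t ∈ insert m s, (Iic x).indicator g t)) ^ 2) := by
      rw [setLIntegral_congr_fun measurableSet_Ioo fun x hx => by rw [hright x hx]]
      exact ofReal_sub_le_lintegral_sq h3 _ hm.2.le
    rw [Finset.sum_insert hms, Finset.sum_insert hms,
      show za + (g m + ∑ t ∈ s, g t) = z₀ + g m by rw [hz₀]; ring,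
      ← lintegral_Ioo_add_lintegral_Ioo _ hm.1.le hm.2.le]
    calc ENNReal.ofReal (F y (z₀ + g m) - F a za)
        ≤ ENNReal.ofReal (F m z₀ - F a za) + ENNReal.ofReal (F m (z₀ + g m) - F m z₀) +
            ENNReal.ofReal (F y (z₀ + g m) - F m (z₀ + g m)) := by
          refine le_trans (le_of_eq ?_) (ENNReal.ofReal_add_le.trans
            (add_le_add ENNReal.ofReal_add_le le_rfl))
          congr 1
          ring
      _ ≤ _ := add_le_add (add_le_add hinit hjump) hlast
      _ = _ := by ring

end Calibration

section CalibrationTsum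

variable {F : ℝ → ℝ → ℝ} {θ α a b za : ℝ} {g w : ℝ → ℝ}

lemma exists_abs_sub_le_of_eq_add_tsum (hg : Summable fun y => |g y|)
    (hw : ∀ x ∈ Ioo a b, w x = za + ∑' y, (Iic x).indicator g y) :
    ∃ M, 0 ≤ M ∧ ∀ x ∈ Ioo a b, |w x - x| ≤ M := by
  refine ⟨|za| + ∑' y, |g y| + (|a| + |b|), by positivity, fun x hx => ?_⟩
  have hsum := abs_le.1 (abs_tsum_indicator_le hg (Iic x))
  rw [hw x hx, abs_le]
  constructor <;> linarith [hx.1, hx.2, neg_abs_le a, le_abs_self b, abs_nonneg a, abs_nonneg b,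
    neg_abs_le za, le_abs_self za]

lemma sq_sub_le_sq_add_of_abs_le {x y z M ε : ℝ} (hy : |y - x| ≤ M) (hz : |z - y| ≤ ε) :
    (x - z) ^ 2 ≤ (y - x) ^ 2 + (2 * M * ε + ε ^ 2) := by
  have h1 := abs_le.1 hy
  have h2 := abs_le.1 hz
  nlinarith [mul_nonneg (sub_nonneg.2 h1.2) (neg_le_iff_add_nonneg.1 h2.1),
    mul_nonneg (neg_le_iff_add_nonneg.1 h1.1) (sub_nonneg.2 h2.2),
    mul_nonneg (sub_nonneg.2 h2.2) (neg_le_iff_add_nonneg.1 h2.1)]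

lemma ofReal_sub_le_add_of_abs_sub_le
    (h3 : ∀ x₁ x₂ z : ℝ, x₁ ≤ x₂ → F x₂ z - F x₁ z ≤ (x₂ - z) ^ 3 - (x₁ - z) ^ 3)
    (h4 : ∀ x z₁ z₂ : ℝ, F x z₂ - F x z₁ ≤ α * |z₂ - z₁| ^ θ) (hα : 0 ≤ α) (hθ : 0 ≤ θ)
    (hab : a ≤ b) (hsupp : Function.support g ⊆ Ioo a b)
    (hw : ∀ x ∈ Ioo a b, w x = za + ∑' y, (Iic x).indicator g y) {M ε : ℝ} (hM : 0 ≤ M)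
    (hε : 0 ≤ ε) (hwM : ∀ x ∈ Ioo a b, |w x - x| ≤ M) {s : Finset ℝ}
    (hs : ↑s ⊆ Function.support g)
    (happrox : ∀ A : Set ℝ, |∑' y, A.indicator g y - ∑ t ∈ s, A.indicator g t| ≤ ε) :
    ENNReal.ofReal (F b (za + ∑' y, g y) - F a za) ≤
      ENNReal.ofReal α * (∑' y : Function.support g, ENNReal.ofReal (|g y| ^ θ)) +
      (∫⁻ x in Ioo a b, ENNReal.ofReal (3 * (w x - x) ^ 2)) +
      ENNReal.ofReal (α * ε ^ θ + 3 * (2 * M * ε + ε ^ 2) * (b - a)) := by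
  have hend : ENNReal.ofReal (F b (za + ∑' y, g y) - F b (za + ∑ t ∈ s, g t)) ≤
      ENNReal.ofReal (α * ε ^ θ) := by
    refine ENNReal.ofReal_le_ofReal ((h4 _ _ _).trans (mul_le_mul_of_nonneg_left ?_ hα))
    refine Real.rpow_le_rpow (abs_nonneg _) ?_ hθ
    simpa using happrox univ
  have hstep := ofReal_sub_le_of_finset h3 h4 hα g a za s hab fun t ht => hsupp (hs ht)
  have hjumps : ∑ t ∈ s, ENNReal.ofReal (|g t| ^ θ) ≤
      ∑' y : Function.support g, ENNReal.ofReal (|g y| ^ θ) := by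
    rw [← Finset.tsum_subtype']
    exact ENNReal.tsum_mono_subtype (fun y => ENNReal.ofReal (|g y| ^ θ)) hs
  have hη : 0 ≤ 3 * (2 * M * ε + ε ^ 2) := by positivity
  have hfid : ∫⁻ x in Ioo a b, ENNReal.ofReal (3 * (x - (za + ∑ t ∈ s, (Iic x).indicator g t)) ^ 2)
      ≤ ∫⁻ x in Ioo a b, (ENNReal.ofReal (3 * (w x - x) ^ 2) +
        ENNReal.ofReal (3 * (2 * M * ε + ε ^ 2))) := by
    refine setLIntegral_mono' measurableSet_Ioo fun x hx => ?_
    rw [← ENNReal.ofReal_add (by positivity) hη]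
    refine ENNReal.ofReal_le_ofReal ?_
    have hz : |za + ∑ t ∈ s, (Iic x).indicator g t - w x| ≤ ε := by
      rw [hw x hx, abs_sub_comm]
      simpa using happrox (Iic x)
    nlinarith [sq_sub_le_sq_add_of_abs_le (hwM x hx) hz]
  rw [lintegral_add_right _ measurable_const, setLIntegral_const, Real.volume_Ioo] at hfid
  calc ENNReal.ofReal (F b (za + ∑' y, g y) - F a za)
      ≤ ENNReal.ofReal (F b (za + ∑' y, g y) - F b (za + ∑ t ∈ s, g t)) +
          ENNReal.ofReal (F b (za + ∑ t ∈ s, g t) - F a za) := by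
        rw [← sub_add_sub_cancel _ (F b (za + ∑ t ∈ s, g t))]
        exact ENNReal.ofReal_add_le
    _ ≤ ENNReal.ofReal (α * ε ^ θ) + (ENNReal.ofReal α *
          (∑' y : Function.support g, ENNReal.ofReal (|g y| ^ θ)) +
          ((∫⁻ x in Ioo a b, ENNReal.ofReal (3 * (w x - x) ^ 2)) +
            ENNReal.ofReal (3 * (2 * M * ε + ε ^ 2)) * ENNReal.ofReal (b - a))) :=
        add_le_add hend (hstep.trans (add_le_add (by gcongr) hfid))
    _ = _ := by
        rw [ENNReal.ofReal_add (by positivity) (mul_nonneg hη (sub_nonneg.2 hab)),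
          ENNReal.ofReal_mul hη]
        ring

/-- For `θ > 0`, (iv) makes `F` Hölder continuous in its second variable, so the inequality
passes from finite truncations of the jump set to the limit. -/
lemma ofReal_sub_le_of_tsum_of_pos
    (h3 : ∀ x₁ x₂ z : ℝ, x₁ ≤ x₂ → F x₂ z - F x₁ z ≤ (x₂ - z) ^ 3 - (x₁ - z) ^ 3)
    (h4 : ∀ x z₁ z₂ : ℝ, F x z₂ - F x z₁ ≤ α * |z₂ - z₁| ^ θ) (hα : 0 ≤ α) (hθ : 0 < θ)
    (hab : a ≤ b) (hg : Summable fun y => |g y|) (hsupp : Function.support g ⊆ Ioo a b)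
    (hw : ∀ x ∈ Ioo a b, w x = za + ∑' y, (Iic x).indicator g y) :
    ENNReal.ofReal (F b (za + ∑' y, g y) - F a za) ≤
      ENNReal.ofReal α * (∑' y : Function.support g, ENNReal.ofReal (|g y| ^ θ)) +
      ∫⁻ x in Ioo a b, ENNReal.ofReal (3 * (w x - x) ^ 2) := by
  obtain ⟨M, hM, hwM⟩ := exists_abs_sub_le_of_eq_add_tsum hg hw
  refine ENNReal.le_of_forall_pos_le_add fun δ hδ _ => ?_
  set φ : ℝ → ℝ := fun e => α * e ^ θ + 3 * (2 * M * e + e ^ 2) * (b - a)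
  have hφ : Tendsto φ (𝓝[>] 0) (𝓝 0) := by
    have hcont : ContinuousAt φ 0 := by
      have := Real.continuousAt_rpow_const 0 θ (Or.inr hθ.le)
      fun_prop
    simpa [φ, Real.zero_rpow hθ.ne'] using hcont.tendsto.mono_left nhdsWithin_le_nhds
  obtain ⟨ε, hεδ, hε : 0 < ε⟩ :=
    ((hφ.eventually (gt_mem_nhds hδ)).and self_mem_nhdsWithin).exists
  obtain ⟨Φ, hΦ⟩ :=
    ((tendsto_order.1 (tendsto_tsum_compl_atTop_zero fun y => |g y|)).2 ε hε).exists
  have happrox (A : Set ℝ) :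
      |∑' y, A.indicator g y - ∑ t ∈ Φ.filter (g · ≠ 0), A.indicator g t| ≤ ε := by
    rw [Finset.sum_filter_of_ne (p := fun t => g t ≠ 0) fun t _ h hg0 => h (by simp [hg0])]
    exact (abs_tsum_indicator_sub_sum_le hg A Φ).trans hΦ.le
  refine (ofReal_sub_le_add_of_abs_sub_le h3 h4 hα hθ.le hab hsupp hw hM hε.le hwM
    (s := Φ.filter (g · ≠ 0)) (fun t ht => (Finset.mem_filter.1 ht).2) happrox).trans ?_
  gcongr
  exact (ENNReal.ofReal_le_ofReal hεδ.le).trans_eq ENNReal.ofReal_coe_nnreal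

lemma ofReal_sub_le_of_tsum
    (h3 : ∀ x₁ x₂ z : ℝ, x₁ ≤ x₂ → F x₂ z - F x₁ z ≤ (x₂ - z) ^ 3 - (x₁ - z) ^ 3)
    (h4 : ∀ x z₁ z₂ : ℝ, F x z₂ - F x z₁ ≤ α * |z₂ - z₁| ^ θ) (hα : 0 < α) (hθ : 0 ≤ θ)
    (hab : a ≤ b) (hg : Summable fun y => |g y|) (hsupp : Function.support g ⊆ Ioo a b)
    (hw : ∀ x ∈ Ioo a b, w x = za + ∑' y, (Iic x).indicator g y) :
    ENNReal.ofReal (F b (za + ∑' y, g y) - F a za) ≤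
      ENNReal.ofReal α * (∑' y : Function.support g, ENNReal.ofReal (|g y| ^ θ)) +
      ∫⁻ x in Ioo a b, ENNReal.ofReal (3 * (w x - x) ^ 2) := by
  rcases (Function.support g).finite_or_infinite with hfin | hinf
  · set s := hfin.toFinset
    have hzero : ∀ y ∉ s, g y = 0 := fun y hy => Function.notMem_support.1 (by simpa [s] using hy)
    have hjumps : ∑' y : Function.support g, ENNReal.ofReal (|g y| ^ θ) =
        ∑ t ∈ s, ENNReal.ofReal (|g t| ^ θ) := by
      have := Finset.tsum_subtype' s fun y => ENNReal.ofReal (|g y| ^ θ)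
      rwa [hfin.coe_toFinset] at this
    rw [tsum_eq_sum hzero, hjumps]
    refine (ofReal_sub_le_of_finset h3 h4 hα.le g a za s hab fun t ht =>
      hsupp (hfin.mem_toFinset.1 ht)).trans_eq ?_
    congr 1
    refine setLIntegral_congr_fun measurableSet_Ioo fun x hx => ?_
    rw [hw x hx, tsum_eq_sum fun y hy => by simp [hzero y hy], sub_sq_comm]
  · rcases hθ.eq_or_lt with rfl | hθ
    · have := hinf.to_subtype
      simp only [Real.rpow_zero, ENNReal.ofReal_one,
        ENNReal.tsum_const_eq_top_of_ne_zero one_ne_zero,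
        ENNReal.mul_top (ENNReal.ofReal_pos.2 hα).ne', top_add, le_top]
    · exact ofReal_sub_le_of_tsum_of_pos h3 h4 hα.le hθ hab hg hsupp hw

end CalibrationTsum

lemma PJloc.ofReal_sub_le_JF {F : ℝ → ℝ → ℝ} {θ α : ℝ}
    (h3 : ∀ x₁ x₂ z : ℝ, x₁ ≤ x₂ → F x₂ z - F x₁ z ≤ (x₂ - z) ^ 3 - (x₁ - z) ^ 3)
    (h4 : ∀ x z₁ z₂ : ℝ, F x z₂ - F x z₁ ≤ α * |z₂ - z₁| ^ θ) (hα : 0 < α) (hθ : 0 ≤ θ)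
    {w : ℝ → ℝ} (P : PJloc w) {a a₁ b₁ b za zb : ℝ} (hab : a < b) (ha₁ : a < a₁) (hb₁ : b₁ < b)
    (hwa : EqOn w (fun _ => za) (Ioo a a₁)) (hwb : EqOn w (fun _ => zb) (Ioo b₁ b)) :
    ENNReal.ofReal (F b zb - F a za) ≤ JF θ α 3 1 (Ioo a b) w P := by
  obtain ⟨c, hc⟩ := P.exists_eq_add_tsum_indicator hab
  set g := (Ioo a b).indicator P.J
  have hsupp : Function.support g ⊆ Ioo a b := support_indicator_subset
  have hsupp' : Function.support g ⊆ Icc a₁ b₁ := by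
    intro y hy
    have hJ : P.J y ≠ 0 := fun h => hy (by simp [g, h])
    refine ⟨not_lt.1 fun h => hJ ?_, not_lt.1 fun h => hJ ?_⟩
    · rw [P.J_eq_sub_of_eqOn (hsupp hy).1 (hwa.mono (Ioo_subset_Ioo_right h.le)),
        hwa ⟨(hsupp hy).1, h⟩, sub_self]
    · rw [P.J_eq_sub_of_eqOn h (hwb.mono (Ioo_subset_Ioo_right (hsupp hy).2.le)),
        hwb ⟨h, (hsupp hy).2⟩, sub_self]
  obtain ⟨x₁, hx₁, hx₁'⟩ := exists_between (lt_min ha₁ hab)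
  obtain ⟨x₂, hx₂, hx₂'⟩ := exists_between (max_lt hb₁ hab)
  have hc_eq : c = za := by
    have h := hc x₁ ⟨hx₁, hx₁'.trans_le (min_le_right _ _)⟩
    rwa [hwa ⟨hx₁, hx₁'.trans_le (min_le_left _ _)⟩, indicator_eq_zero.2, tsum_zero, add_zero,
      eq_comm] at h
    exact disjoint_left.2 fun y hy hy' => (hx₁'.trans_le (min_le_left _ _)).not_ge
      (le_trans (hsupp' hy).1 hy')
  have hzb : zb = za + ∑' y, g y := by
    have h := hc x₂ ⟨(le_max_right _ _).trans_lt hx₂, hx₂'⟩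
    rwa [hwb ⟨(le_max_left _ _).trans_lt hx₂, hx₂'⟩, indicator_eq_self.2, hc_eq] at h
    exact hsupp'.trans fun y hy => hy.2.trans ((le_max_left _ _).trans hx₂.le)
  rw [hc_eq] at hc
  refine (hzb ▸ ofReal_sub_le_of_tsum h3 h4 hα hθ hab.le (P.summable_abs_indicator_J hab) hsupp
    hc).trans_eq ?_
  rw [JF_one_eq P (by norm_num), P.support_indicator_J]
  congr 2
  exact tsum_congr fun y => by rw [indicator_of_mem y.2.2]

lemma stairS_eq {k : ℤ} {y : ℝ} (h₁ : 2 * k - 1 ≤ y) (h₂ : y < 2 * k + 1) : stairS y = 2 * k := by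
  rw [stairS, show ⌊(y + 1) / 2⌋ = k from Int.floor_eq_iff.2 ⟨by linarith, by linarith⟩]

section Staircase

variable {τ₀ : ℝ} {v : ℝ → ℝ}

lemma eq_of_eq_stairS_sub (hv : ∀ x, v x = stairS (x - τ₀) + τ₀) {k : ℤ} {x : ℝ}
    (h₁ : 2 * k - 1 + τ₀ ≤ x) (h₂ : x < 2 * k + 1 + τ₀) : v x = 2 * k + τ₀ := by
  rw [hv, stairS_eq (by linarith) (by linarith)]

lemma PJloc.J_stair_eq_two (hv : ∀ x, v x = stairS (x - τ₀) + τ₀) (P : PJloc v) (k : ℤ) :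
    P.J (2 * k + 1 + τ₀) = 2 := by
  rw [P.J_eq_sub_of_eqOn (l := 2 * k - 1 + τ₀) (z := 2 * k + τ₀) (by linarith)
    fun x hx => eq_of_eq_stairS_sub hv hx.1.le hx.2,
    eq_of_eq_stairS_sub hv (k := k + 1) (by push_cast; linarith) (by push_cast; linarith)]
  push_cast
  ring

lemma PJloc.J_stair_eq_zero (hv : ∀ x, v x = stairS (x - τ₀) + τ₀) (P : PJloc v) {x₀ : ℝ}
    (hx₀ : ∀ k : ℤ, x₀ ≠ 2 * k + 1 + τ₀) : P.J x₀ = 0 := by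
  set k := ⌈(x₀ - τ₀ - 1) / 2⌉
  have h₁ : 2 * k - 1 + τ₀ < x₀ := by linarith [Int.ceil_lt_add_one ((x₀ - τ₀ - 1) / 2)]
  have h₂ : x₀ < 2 * k + 1 + τ₀ :=
    (show x₀ ≤ 2 * k + 1 + τ₀ by linarith [Int.le_ceil ((x₀ - τ₀ - 1) / 2)]).lt_of_ne (hx₀ k)
  rw [P.J_eq_sub_of_eqOn h₁ fun x hx => eq_of_eq_stairS_sub hv hx.1.le (hx.2.trans h₂),
    eq_of_eq_stairS_sub hv h₁.le h₂, sub_self]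

lemma PJloc.S_stair_inter_Ioo (hv : ∀ x, v x = stairS (x - τ₀) + τ₀) (P : PJloc v) (p q : ℤ) :
    P.S ∩ Ioo (2 * p + 1 + τ₀) (2 * q + 1 + τ₀) =
      ((Finset.Ioo p q).image fun k : ℤ => 2 * (k : ℝ) + 1 + τ₀ : Set ℝ) := by
  ext x
  simp only [mem_inter_iff, P.mem_S_iff, Finset.coe_image, Finset.coe_Ioo, mem_image, mem_Ioo]
  constructor
  · rintro ⟨hJ, h₁, h₂⟩
    obtain ⟨k, rfl⟩ : ∃ k : ℤ, x = 2 * k + 1 + τ₀ := by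
      by_contra! h
      exact hJ (P.J_stair_eq_zero hv h)
    exact ⟨k, ⟨by exact_mod_cast (show (p : ℝ) < k by linarith),
      by exact_mod_cast (show (k : ℝ) < q by linarith)⟩, rfl⟩
  · rintro ⟨k, ⟨hpk, hkq⟩, rfl⟩
    have hpk' : (p : ℝ) < k := by exact_mod_cast hpk
    have hkq' : (k : ℝ) < q := by exact_mod_cast hkq
    exact ⟨by rw [P.J_stair_eq_two hv]; norm_num, by linarith, by linarith⟩

lemma PJloc.tsum_jump_stair (hv : ∀ x, v x = stairS (x - τ₀) + τ₀) (P : PJloc v) (θ : ℝ)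
    (p q : ℤ) :
    ∑' x : ↥(P.S ∩ Ioo (2 * p + 1 + τ₀) (2 * q + 1 + τ₀)), ENNReal.ofReal (|P.J x| ^ θ) =
      (q - p - 1).toNat * ENNReal.ofReal (2 ^ θ) := by
  rw [P.S_stair_inter_Ioo hv, Finset.tsum_subtype' _ fun x => ENNReal.ofReal (|P.J x| ^ θ),
    Finset.sum_image fun k₁ _ k₂ _ h => by simpa using h]
  simp [P.J_stair_eq_two hv, Int.card_Ioo]

lemma lintegral_stair_sub_sq (hv : ∀ x, v x = stairS (x - τ₀) + τ₀) (p : ℤ) (n : ℕ) :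
    ∫⁻ x in Ioo (2 * p + 1 + τ₀) (2 * (p + n) + 1 + τ₀), ENNReal.ofReal (3 * (v x - x) ^ 2) =
      ENNReal.ofReal (2 * n) := by
  induction n with
  | zero => simp
  | succ n ih =>
    have hcell : ∀ x ∈ Ioo (2 * (p + n) + 1 + τ₀) (2 * (p + (n + 1 : ℕ)) + 1 + τ₀),
        ENNReal.ofReal (3 * (v x - x) ^ 2) =
          ENNReal.ofReal (3 * (x - (2 * (p + n + 1) + τ₀)) ^ 2) := fun x hx => by
      push_cast at hx
      rw [eq_of_eq_stairS_sub hv (k := p + n + 1) (by push_cast; linarith [hx.1])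
        (by push_cast; linarith [hx.2]), sub_sq_comm]
      push_cast
      ring_nf
    rw [← lintegral_Ioo_add_lintegral_Ioo _ (b := 2 * (p + n) + 1 + τ₀) (by linarith)
      (by push_cast; linarith), ih,
      setLIntegral_congr_fun measurableSet_Ioo hcell,
      lintegral_Ioo_ofReal_three_mul_sq _ (by push_cast; linarith),
      ← ENNReal.ofReal_add (by positivity) (by push_cast; ring_nf; norm_num)]
    push_cast
    ring_nf

lemma JF_stair (hv : ∀ x, v x = stairS (x - τ₀) + τ₀) (P : PJloc v) {θ α : ℝ} (hα : 0 ≤ α)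
    (p : ℤ) (n : ℕ) :
    JF θ α 3 1 (Ioo (2 * p + 1 + τ₀) (2 * (p + n + 1) + 1 + τ₀)) v P =
      ENNReal.ofReal (α * 2 ^ θ * n + 2 * (n + 1)) := by
  have hfid := lintegral_stair_sub_sq hv p (n + 1)
  push_cast [← add_assoc] at hfid
  rw [JF_one_eq P (by norm_num), hfid,
    show 2 * ((p : ℝ) + n + 1) + 1 + τ₀ = 2 * ((p + n + 1 : ℤ) : ℝ) + 1 + τ₀ by push_cast; ring,
    P.tsum_jump_stair hv θ p (p + n + 1), show (p + n + 1 - p - 1).toNat = n by omega,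
    ENNReal.ofReal_add (by positivity) (by positivity),
    ENNReal.ofReal_mul (p := α * 2 ^ θ) (by positivity), ENNReal.ofReal_mul hα,
    ENNReal.ofReal_natCast]
  ring

end Staircase

lemma sub_eq_of_calibration_eq {F : ℝ → ℝ → ℝ} {c : ℝ}
    (h1 : ∀ j : ℤ, F (2 * (j:ℝ) + 1) (2 * (j:ℝ)) - F (2 * (j:ℝ) - 1) (2 * (j:ℝ)) = 2)
    (h2 : ∀ j : ℤ, F (2 * (j:ℝ) - 1) (2 * (j:ℝ)) - F (2 * (j:ℝ) - 1) (2 * (j:ℝ) - 2) = c)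
    (p : ℤ) (n : ℕ) :
    F (2 * (p + n + 1) + 1) (2 * (p + n + 1)) - F (2 * p + 1) (2 * p + 2) =
      c * n + 2 * (n + 1) := by
  induction n with
  | zero =>
    have := h1 (p + 1)
    push_cast at this ⊢
    ring_nf at this ⊢
    linarith
  | succ n ih =>
    have e1 := h1 (p + n + 2)
    have e2 := h2 (p + n + 2)
    push_cast at e1 e2 ih ⊢
    ring_nf at e1 e2 ih ⊢
    linarith

lemma exists_stair_interval_superset {K : Set ℝ} (hK : Bornology.IsBounded K) (τ₀ : ℝ) :
    ∃ (p : ℤ) (n : ℕ), K ⊆ Ioo (2 * p + 2 + τ₀) (2 * (p + n + 1) + τ₀) := by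
  obtain ⟨R, hR⟩ := hK.subset_closedBall 0
  set p := ⌊(-R - τ₀) / 2⌋ - 2
  refine ⟨p, ⌈(R - τ₀) / 2 - p⌉₊, fun x hx => ?_⟩
  have hxR : -R ≤ x ∧ x ≤ R := by simpa [abs_le] using hR hx
  have hp : (p : ℝ) ≤ (-R - τ₀) / 2 - 2 := by
    simpa [p] using Int.floor_le ((-R - τ₀) / 2)
  have hn := Nat.le_ceil ((R - τ₀) / 2 - p)
  constructor <;> linarith

lemma eqOn_stair_of_eq_off {τ₀ : ℝ} {v w : ℝ → ℝ} (hv : ∀ x, v x = stairS (x - τ₀) + τ₀)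
    {K : Set ℝ} {p : ℤ} {n : ℕ} (hKI : K ⊆ Ioo (2 * p + 2 + τ₀) (2 * (p + n + 1) + τ₀))
    (hKw : ∀ x ∉ K, w x = v x) :
    EqOn w (fun _ => 2 * p + 2 + τ₀) (Ioo (2 * p + 1 + τ₀) (2 * p + 2 + τ₀)) ∧
      EqOn w (fun _ => 2 * (p + n + 1) + τ₀)
        (Ioo (2 * (p + n + 1) + τ₀) (2 * (p + n + 1) + 1 + τ₀)) := by
  constructor <;> intro x hx
  · rw [hKw x fun h => (hKI h).1.not_gt hx.2, eq_of_eq_stairS_sub hv (k := p + 1)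
      (by push_cast; linarith [hx.1]) (by push_cast; linarith [hx.2])]
    push_cast
    ring
  · rw [hKw x fun h => (hKI h).2.not_gt hx.1, eq_of_eq_stairS_sub hv (k := p + n + 1)
      (by push_cast; linarith [hx.1]) (by push_cast; linarith [hx.2])]
    push_cast
    ring

theorem calibration_one_dimension_general
    (θ : ℝ) (hθ : θ ∈ Set.Ico (0:ℝ) 1)
    (F : ℝ → ℝ → ℝ)
    (h1 : ∀ j : ℤ, F (2 * (j:ℝ) + 1) (2 * (j:ℝ)) - F (2 * (j:ℝ) - 1) (2 * (j:ℝ)) = 2)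
    (h2 : ∀ j : ℤ, F (2 * (j:ℝ) - 1) (2 * (j:ℝ)) - F (2 * (j:ℝ) - 1) (2 * (j:ℝ) - 2)
            = 4 / (1 - θ))
    (h3 : ∀ x₁ x₂ z : ℝ, x₁ ≤ x₂ →
            F x₂ z - F x₁ z ≤ (x₂ - z) ^ 3 - (x₁ - z) ^ 3)
    (h4 : ∀ x z₁ z₂ : ℝ,
            F x z₂ - F x z₁ ≤ (2:ℝ) ^ (2 - θ) / (1 - θ) * |z₂ - z₁| ^ θ)
    (τ₀ : ℝ)
    (v : ℝ → ℝ) (hv : ∀ x, v x = stairS (x - τ₀) + τ₀)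
    (Pv : PJloc v) :
    EntireLocalMin θ ((2:ℝ) ^ (2 - θ) / (1 - θ)) 3 1 v Pv := by
  rintro Ω hΩ w Pw ⟨K, hK, hKΩ, hKw⟩
  set α := (2:ℝ) ^ (2 - θ) / (1 - θ)
  have hα : 0 < α := div_pos (by positivity) (sub_pos.2 hθ.2)
  have hα2 : α * 2 ^ θ = 4 / (1 - θ) := by
    rw [div_mul_eq_mul_div, ← Real.rpow_add two_pos, sub_add_cancel]
    norm_num
  set Ft : ℝ → ℝ → ℝ := fun x z => F (x - τ₀) (z - τ₀)
  have ht3 : ∀ x₁ x₂ z, x₁ ≤ x₂ → Ft x₂ z - Ft x₁ z ≤ (x₂ - z) ^ 3 - (x₁ - z) ^ 3 :=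
    fun x₁ x₂ z h => by
      simpa only [Ft, sub_sub_sub_cancel_right] using h3 _ _ (z - τ₀) (sub_le_sub_right h τ₀)
  have ht4 : ∀ x z₁ z₂, Ft x z₂ - Ft x z₁ ≤ α * |z₂ - z₁| ^ θ := fun x z₁ z₂ => by
    simpa only [Ft, sub_sub_sub_cancel_right] using h4 (x - τ₀) (z₁ - τ₀) (z₂ - τ₀)
  obtain ⟨p, n, hKI⟩ := exists_stair_interval_superset hK.isBounded τ₀
  obtain ⟨hwa, hwb⟩ := eqOn_stair_of_eq_off hv hKI hKw
  have hcal := Pw.ofReal_sub_le_JF ht3 ht4 hα hθ.1 (by linarith) (by linarith) (by linarith) hwa hwb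
  have hFt : Ft (2 * (p + n + 1) + 1 + τ₀) (2 * (p + n + 1) + τ₀) - Ft (2 * p + 1 + τ₀)
      (2 * p + 2 + τ₀) = α * 2 ^ θ * n + 2 * (n + 1) := by
    simp only [Ft, add_sub_cancel_right]
    rw [sub_eq_of_calibration_eq h1 h2, hα2]
  rw [hFt, ← JF_stair hv Pv hα.le p n] at hcal
  exact JF_le_of_le_of_eq_off Pv Pw hΩ.measurableSet measurableSet_Ioo hK.isClosed hKΩ
    (hKI.trans (Ioo_subset_Ioo (by linarith) (by linarith))) hcal
    (by rw [JF_stair hv Pv hα.le]; exact ENNReal.ofReal_ne_top) fun x hx => (hKw x hx).symm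

/-- **Calibration in one dimension.** If `F : ℝ² → ℝ` satisfies the
two calibration equalities and the two calibration inequalities, then the canonical
staircase `S(x) = 2⌊(x+1)/2⌋` and all its oblique translations are entire local
minimizers of `JF_{θ, 2^{2-θ}/(1-θ), 3, 1}`. -/
theorem calibration_one_dimension
    (θ : ℝ) (hθ : θ ∈ Set.Ico (0:ℝ) 1)
    (F : ℝ → ℝ → ℝ)
    (h1 : ∀ j : ℤ, F (2 * (j:ℝ) + 1) (2 * (j:ℝ)) - F (2 * (j:ℝ) - 1) (2 * (j:ℝ)) = 2)
    (h2 : ∀ j : ℤ, F (2 * (j:ℝ) - 1) (2 * (j:ℝ)) - F (2 * (j:ℝ) - 1) (2 * (j:ℝ) - 2)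
            = 4 / (1 - θ))
    (h3 : ∀ x₁ x₂ z : ℝ, x₁ ≤ x₂ →
            F x₂ z - F x₁ z ≤ (x₂ - z) ^ 3 - (x₁ - z) ^ 3)
    (h4 : ∀ x z₁ z₂ : ℝ,
            F x z₂ - F x z₁ ≤ (2:ℝ) ^ (2 - θ) / (1 - θ) * |z₂ - z₁| ^ θ)
    (τ₀ : ℝ) (hτ : τ₀ ∈ Set.Icc (-1:ℝ) 1)
    (v : ℝ → ℝ) (hv : ∀ x, v x = stairS (x - τ₀) + τ₀)
    (Pv : PJloc v) :
    EntireLocalMin θ ((2:ℝ) ^ (2 - θ) / (1 - θ)) 3 1 v Pv :=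
  calibration_one_dimension_general θ hθ F h1 h2 h3 h4 τ₀ v hv Pv
end

section
/- Let θ ∈ [0,1). Then for every z ∈ ℝ and all x₁ ≤ x₂ one has F_θ(x₂, z) − F_θ(x₁, z) ≤ (x₂−z)³ − (x₁−z)³; moreover equality holds whenever z − σ_θ ≤ x₁ ≤ x₂ ≤ z + σ_θ. -/
open Set

/-- The cubic `φ_θ(σ) = (3−θ)σ − (1−θ)σ³`. -/
noncomputable def phiCubic (θ σ : ℝ) : ℝ := (3 - θ) * σ - (1 - θ) * σ ^ 3

/-- `σ_θ = √((3−θ)/(3(1−θ)))`. -/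
noncomputable def sigmaTheta (θ : ℝ) : ℝ := Real.sqrt ((3 - θ) / (3 * (1 - θ)))

/-- The truncated cubic `φ̂_θ`. -/
noncomputable def phiHat (θ σ : ℝ) : ℝ :=
  if σ ≤ -sigmaTheta θ then phiCubic θ (-sigmaTheta θ)
  else if σ ≤ sigmaTheta θ then phiCubic θ σ
  else phiCubic θ (sigmaTheta θ)

/-- The calibration `F_θ(x,z) = (1/(1−θ))·[(3−θ)x + φ̂_θ(z−x)]`. -/
noncomputable def Fcal (θ x z : ℝ) : ℝ :=
  (1 / (1 - θ)) * ((3 - θ) * x + phiHat θ (z - x))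

lemma sigma_nonneg (θ : ℝ) : 0 ≤ sigmaTheta θ := Real.sqrt_nonneg _

lemma sigma_sq {θ : ℝ} (hθ : θ ∈ Set.Ico (0:ℝ) 1) :
    3 * (1 - θ) * (sigmaTheta θ) ^ 2 = 3 - θ := by
  have h1 : 0 < 1 - θ := by have := hθ.2; linarith
  have h2 : 0 ≤ (3 - θ) / (3 * (1 - θ)) := by
    apply div_nonneg <;> nlinarith
  rw [sigmaTheta, Real.sq_sqrt h2]
  field_simp

lemma phiHat_mid {θ : ℝ} (x z : ℝ) (h1 : z - sigmaTheta θ ≤ x) (h2 : x ≤ z + sigmaTheta θ) :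
    phiHat θ (z - x) = phiCubic θ (z - x) := by
  rw [phiHat]
  split_ifs with ha hb
  · have : z - x = -sigmaTheta θ := le_antisymm ha (by linarith)
    rw [this]
  · rfl
  · exfalso; exact hb (by linarith)

lemma phiHat_left {θ : ℝ} (x z : ℝ) (h : x ≤ z - sigmaTheta θ) :
    phiHat θ (z - x) = phiCubic θ (sigmaTheta θ) := by
  have hs0 := sigma_nonneg θ
  rw [phiHat]
  split_ifs with ha hb
  · have hs : sigmaTheta θ = 0 := le_antisymm (by linarith) hs0
    rw [hs]; norm_num
  · have : z - x = sigmaTheta θ := le_antisymm hb (by linarith)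
    rw [this]
  · rfl

lemma phiHat_right {θ : ℝ} (x z : ℝ) (h : z + sigmaTheta θ ≤ x) :
    phiHat θ (z - x) = phiCubic θ (-sigmaTheta θ) := by
  rw [phiHat, if_pos (by linarith)]

lemma Fcal_mid {θ : ℝ} (hθ : θ ∈ Set.Ico (0:ℝ) 1) (x z : ℝ)
    (h1 : z - sigmaTheta θ ≤ x) (h2 : x ≤ z + sigmaTheta θ) :
    Fcal θ x z = 3 * (sigmaTheta θ) ^ 2 * z + (x - z) ^ 3 := by
  have ht : 0 < 1 - θ := by have := hθ.2; linarith
  have hs2 := sigma_sq hθ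
  rw [Fcal, phiHat_mid x z h1 h2, phiCubic]
  field_simp
  linear_combination -z * hs2

lemma Fcal_left {θ : ℝ} (hθ : θ ∈ Set.Ico (0:ℝ) 1) (x z : ℝ)
    (h : x ≤ z - sigmaTheta θ) :
    Fcal θ x z = 3 * (sigmaTheta θ) ^ 2 * x + 2 * (sigmaTheta θ) ^ 3 := by
  have ht : 0 < 1 - θ := by have := hθ.2; linarith
  have hs2 := sigma_sq hθ
  rw [Fcal, phiHat_left x z h, phiCubic]
  field_simp
  linear_combination -(x + sigmaTheta θ) * hs2

lemma Fcal_right {θ : ℝ} (hθ : θ ∈ Set.Ico (0:ℝ) 1) (x z : ℝ)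
    (h : z + sigmaTheta θ ≤ x) :
    Fcal θ x z = 3 * (sigmaTheta θ) ^ 2 * x - 2 * (sigmaTheta θ) ^ 3 := by
  have ht : 0 < 1 - θ := by have := hθ.2; linarith
  have hs2 := sigma_sq hθ
  rw [Fcal, phiHat_right x z h, phiCubic]
  field_simp
  linear_combination -(x - sigmaTheta θ) * hs2

/-- For `θ ∈ [0,1)`: `F_θ(x₂,z) − F_θ(x₁,z) ≤ (x₂−z)³ − (x₁−z)³`
whenever `x₁ ≤ x₂`, with equality whenever `z − σ_θ ≤ x₁ ≤ x₂ ≤ z + σ_θ`. -/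
theorem Fcal_horizontal_inequality (θ : ℝ) (hθ : θ ∈ Set.Ico (0:ℝ) 1) :
    (∀ z x₁ x₂ : ℝ, x₁ ≤ x₂ →
      Fcal θ x₂ z - Fcal θ x₁ z ≤ (x₂ - z) ^ 3 - (x₁ - z) ^ 3) ∧
    (∀ z x₁ x₂ : ℝ, z - sigmaTheta θ ≤ x₁ → x₁ ≤ x₂ → x₂ ≤ z + sigmaTheta θ →
      Fcal θ x₂ z - Fcal θ x₁ z = (x₂ - z) ^ 3 - (x₁ - z) ^ 3) := by
  have hs0 : 0 ≤ sigmaTheta θ := sigma_nonneg θ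
  set s := sigmaTheta θ with hsdef
  constructor
  · intro z x₁ x₂ h12
    rcases le_or_gt x₂ (z - s) with h2 | h2
    · -- both left of z - s
      have h1 : x₁ ≤ z - s := le_trans h12 h2
      rw [Fcal_left hθ x₁ z h1, Fcal_left hθ x₂ z h2]
      have ha : 0 ≤ -s - (x₁ - z) := by linarith
      have hb : 0 ≤ -s - (x₂ - z) := by linarith
      have hd : 0 ≤ x₂ - x₁ := by linarith
      nlinarith [mul_nonneg hd (mul_nonneg hs0 ha), mul_nonneg hd (mul_nonneg hs0 hb),
        mul_nonneg hd (mul_nonneg ha hb), mul_nonneg hd (mul_nonneg ha ha),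
        mul_nonneg hd (mul_nonneg hb hb)]
    · rcases le_or_gt (z + s) x₁ with h1 | h1
      · -- both right of z + s
        have h2' : z + s ≤ x₂ := le_trans h1 h12
        rw [Fcal_right hθ x₁ z h1, Fcal_right hθ x₂ z h2']
        have ha : 0 ≤ (x₁ - z) - s := by linarith
        have hb : 0 ≤ (x₂ - z) - s := by linarith
        have hd : 0 ≤ x₂ - x₁ := by linarith
        nlinarith [mul_nonneg hd (mul_nonneg hs0 ha), mul_nonneg hd (mul_nonneg hs0 hb),
          mul_nonneg hd (mul_nonneg ha hb), mul_nonneg hd (mul_nonneg ha ha),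
          mul_nonneg hd (mul_nonneg hb hb)]
      · have hA : 3 * s ^ 2 * z ≤ Fcal θ x₁ z - (x₁ - z) ^ 3 := by
          rcases le_or_gt x₁ (z - s) with h | h
          · rw [Fcal_left hθ x₁ z h]
            have h2s : 0 ≤ 2 * s - (x₁ - z) := by linarith
            nlinarith [mul_nonneg (sq_nonneg (x₁ - z + s)) h2s]
          · rw [Fcal_mid hθ x₁ z h.le h1.le]; linarith
        have hB : Fcal θ x₂ z - (x₂ - z) ^ 3 ≤ 3 * s ^ 2 * z := by
          rcases le_or_gt (z + s) x₂ with h | h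
          · rw [Fcal_right hθ x₂ z h]
            have h2s : 0 ≤ (x₂ - z) + 2 * s := by linarith
            nlinarith [mul_nonneg (sq_nonneg (x₂ - z - s)) h2s]
          · rw [Fcal_mid hθ x₂ z h2.le h.le]; linarith
        linarith
  · intro z x₁ x₂ h1 h12 h2
    rw [Fcal_mid hθ x₁ z h1 (by linarith), Fcal_mid hθ x₂ z (by linarith) h2]
    ring
end

section
/- Let θ ∈ [0,1). Then for all real numbers a, b one has φ̂_θ(b) − φ̂_θ(a) ≤ 2^{2−θ}·|b−a|^θ. Consequently, for every x ∈ ℝ and all z₁, z₂ ∈ ℝ, F_θ(x, z₂) − F_θ(x, z₁) ≤ (2^{2−θ}/(1−θ))·|z₂−z₁|^θ. -/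
open Set

/-- Clamp to `[-s, s]`. -/
noncomputable def clampS (s x : ℝ) : ℝ := max (-s) (min x s)

lemma phiHat_eq_clamp (θ x : ℝ) : phiHat θ x = phiCubic θ (clampS (sigmaTheta θ) x) := by
  have hs : 0 ≤ sigmaTheta θ := Real.sqrt_nonneg _
  unfold phiHat clampS
  split_ifs with h1 h2
  · rw [min_eq_left (by linarith), max_eq_left (by linarith)]
  · rw [min_eq_left h2, max_eq_right (by linarith)]
  · rw [min_eq_right (by linarith), max_eq_right (by linarith)]

lemma clampS_mem (s x : ℝ) (hs : 0 ≤ s) : -s ≤ clampS s x ∧ clampS s x ≤ s :=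
  ⟨le_max_left _ _, max_le (by linarith) (min_le_right _ _)⟩

lemma clampS_mono (s : ℝ) {a b : ℝ} (hab : a ≤ b) : clampS s a ≤ clampS s b :=
  max_le_max le_rfl (min_le_min_right _ hab)

lemma clampS_sub_le (s : ℝ) {a b : ℝ} (hab : a ≤ b) : clampS s b - clampS s a ≤ b - a := by
  unfold clampS
  simp only [max_def, min_def]
  split_ifs <;> linarith

/-- monotonicity of the cubic on `[-σ_θ, σ_θ]`. -/
lemma phiCubic_mono (θ : ℝ) (hθ1 : θ < 1) {u v : ℝ}
    (hu : -sigmaTheta θ ≤ u) (huv : u ≤ v) (hv : v ≤ sigmaTheta θ) :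
    phiCubic θ u ≤ phiCubic θ v := by
  set s := sigmaTheta θ with hsdef
  have h1θ : (0:ℝ) < 1 - θ := by linarith
  have hs2 : s ^ 2 = (3 - θ) / (3 * (1 - θ)) := by
    rw [hsdef, sigmaTheta, Real.sq_sqrt (div_nonneg (by linarith) (by linarith))]
  have h3 : 3 * (1 - θ) * s ^ 2 = 3 - θ := by
    rw [hs2]; field_simp
  have hs0 : 0 ≤ s := Real.sqrt_nonneg _
  have hus : u ≤ s := le_trans huv hv
  have hvs : -s ≤ v := le_trans hu huv
  have h4 : 0 ≤ v - u := by linarith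
  unfold phiCubic
  nlinarith [mul_nonneg (mul_nonneg h1θ.le h4)
      (mul_nonneg (by linarith : (0:ℝ) ≤ s - u) (by linarith : (0:ℝ) ≤ s + u)),
    mul_nonneg (mul_nonneg h1θ.le h4)
      (mul_nonneg (by linarith : (0:ℝ) ≤ s - v) (by linarith : (0:ℝ) ≤ s + v)),
    mul_nonneg (mul_nonneg h1θ.le h4)
      (mul_nonneg (by linarith : (0:ℝ) ≤ s - u) (by linarith : (0:ℝ) ≤ s + v)),
    mul_nonneg (mul_nonneg h1θ.le h4)
      (mul_nonneg (by linarith : (0:ℝ) ≤ s + u) (by linarith : (0:ℝ) ≤ s - v))]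

/-- The midpoint bound: `φ(b) − φ(a) ≤ 2 φ((b−a)/2)` for `a ≤ b`. -/
lemma phiCubic_diff_le (θ : ℝ) (hθ1 : θ < 1) {a b : ℝ} (hab : a ≤ b) :
    phiCubic θ b - phiCubic θ a ≤ 2 * phiCubic θ ((b - a) / 2) := by
  unfold phiCubic
  nlinarith [mul_nonneg (mul_nonneg (by linarith : (0:ℝ) ≤ b - a)
    (by linarith : (0:ℝ) ≤ 1 - θ)) (sq_nonneg (a + b))]

/-- Key scalar bound: `φ(t) ≤ 2 t^θ` for `t ≥ 0`. -/
lemma phiCubic_le_rpow (θ : ℝ) (hθ0 : 0 ≤ θ) (hθ1 : θ < 1) {t : ℝ} (ht : 0 ≤ t) :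
    phiCubic θ t ≤ 2 * t ^ θ := by
  rcases eq_or_lt_of_le ht with h | h
  · rw [← h]
    unfold phiCubic
    have : (0:ℝ) ≤ (0:ℝ) ^ θ := Real.rpow_nonneg le_rfl θ
    nlinarith
  · set D : ℝ := (1 - θ) * t + θ with hD
    have hD0 : 0 < D := by
      have h1 : 0 < (1 - θ) * t := by nlinarith
      nlinarith
    have ham : t ^ (1 - θ) ≤ D := by
      have h2 := Real.geom_mean_le_arith_mean2_weighted (by linarith : (0:ℝ) ≤ 1 - θ) hθ0
        ht (by norm_num : (0:ℝ) ≤ 1) (by ring)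
      simpa [hD] using h2
    have htθ : 0 ≤ t ^ θ := Real.rpow_nonneg ht θ
    have hsplit : t = t ^ (1 - θ) * t ^ θ := by
      rw [← Real.rpow_add h]
      norm_num
    have h2 : t ≤ D * t ^ θ := by
      calc t = t ^ (1 - θ) * t ^ θ := hsplit
        _ ≤ D * t ^ θ := mul_le_mul_of_nonneg_right ham htθ
    have h1 : phiCubic θ t * D ≤ 2 * t := by
      unfold phiCubic
      simp only [hD]
      nlinarith [mul_nonneg (mul_nonneg
        (mul_nonneg (by linarith : (0:ℝ) ≤ 1 - θ) ht) (sq_nonneg (t - 1)))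
        (by nlinarith : (0:ℝ) ≤ (1 - θ) * t + 1 + (1 - θ))]
    have hfin : phiCubic θ t * D ≤ (2 * t ^ θ) * D := by
      calc phiCubic θ t * D ≤ 2 * t := h1
        _ ≤ 2 * (D * t ^ θ) := by linarith
        _ = (2 * t ^ θ) * D := by ring
    exact le_of_mul_le_mul_right hfin hD0

/-- For `θ ∈ [0,1)`: `φ̂_θ(b) − φ̂_θ(a) ≤ 2^{2−θ}|b−a|^θ` for all `a, b`,
and consequently `F_θ(x,z₂) − F_θ(x,z₁) ≤ (2^{2−θ}/(1−θ))·|z₂−z₁|^θ`. -/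
theorem Fcal_vertical_inequality (θ : ℝ) (hθ : θ ∈ Set.Ico (0:ℝ) 1) :
    (∀ a b : ℝ, phiHat θ b - phiHat θ a ≤ (2:ℝ) ^ (2 - θ) * |b - a| ^ θ) ∧
    (∀ x z₁ z₂ : ℝ,
      Fcal θ x z₂ - Fcal θ x z₁ ≤ (2:ℝ) ^ (2 - θ) / (1 - θ) * |z₂ - z₁| ^ θ) := by
  obtain ⟨hθ0, hθ1⟩ := hθ
  have h1θ : (0:ℝ) < 1 - θ := by linarith
  have hmain : ∀ a b : ℝ, phiHat θ b - phiHat θ a ≤ (2:ℝ) ^ (2 - θ) * |b - a| ^ θ := by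
    intro a b
    have hs0 : 0 ≤ sigmaTheta θ := Real.sqrt_nonneg _
    have hRHS : 0 ≤ (2:ℝ) ^ (2 - θ) * |b - a| ^ θ := by positivity
    rw [phiHat_eq_clamp, phiHat_eq_clamp]
    rcases le_total b a with hba | hab
    · have h := phiCubic_mono θ hθ1 (clampS_mem _ b hs0).1 (clampS_mono _ hba)
        (clampS_mem _ a hs0).2
      linarith
    · set a' := clampS (sigmaTheta θ) a with ha'
      set b' := clampS (sigmaTheta θ) b with hb'
      have hab' : a' ≤ b' := clampS_mono _ hab
      have hsub : b' - a' ≤ b - a := clampS_sub_le _ hab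
      set t : ℝ := (b' - a') / 2 with htdef
      have ht0 : 0 ≤ t := by rw [htdef]; linarith
      have ht1 : t ≤ |b - a| / 2 := by
        have := le_abs_self (b - a)
        rw [htdef]; linarith
      have step1 : phiCubic θ b' - phiCubic θ a' ≤ 2 * phiCubic θ t :=
        phiCubic_diff_le θ hθ1 hab'
      have step2 : phiCubic θ t ≤ 2 * t ^ θ := phiCubic_le_rpow θ hθ0 hθ1 ht0
      have step3 : t ^ θ ≤ (|b - a| / 2) ^ θ := Real.rpow_le_rpow ht0 ht1 hθ0
      have step4 : (4:ℝ) * (|b - a| / 2) ^ θ = (2:ℝ) ^ (2 - θ) * |b - a| ^ θ := by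
        rw [Real.div_rpow (abs_nonneg _) (by norm_num : (0:ℝ) ≤ 2),
          Real.rpow_sub (by norm_num : (0:ℝ) < 2)]
        have h4 : (2:ℝ) ^ (2:ℝ) = 4 := by
          rw [show (2:ℝ) = ((2:ℕ):ℝ) from by norm_num, Real.rpow_natCast]
          norm_num
        rw [h4]
        ring
      calc phiCubic θ b' - phiCubic θ a' ≤ 2 * phiCubic θ t := step1
        _ ≤ 2 * (2 * t ^ θ) := by linarith
        _ = 4 * t ^ θ := by ring
        _ ≤ 4 * (|b - a| / 2) ^ θ := by linarith
        _ = (2:ℝ) ^ (2 - θ) * |b - a| ^ θ := step4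
  refine ⟨hmain, fun x z₁ z₂ => ?_⟩
  have h := hmain (z₁ - x) (z₂ - x)
  have habs : |z₂ - x - (z₁ - x)| = |z₂ - z₁| := by ring_nf
  rw [habs] at h
  have hdiff : Fcal θ x z₂ - Fcal θ x z₁
      = (1 / (1 - θ)) * (phiHat θ (z₂ - x) - phiHat θ (z₁ - x)) := by
    unfold Fcal; ring
  rw [hdiff]
  have hpos : 0 < 1 / (1 - θ) := by positivity
  calc (1 / (1 - θ)) * (phiHat θ (z₂ - x) - phiHat θ (z₁ - x))
      ≤ (1 / (1 - θ)) * ((2:ℝ) ^ (2 - θ) * |z₂ - z₁| ^ θ) :=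
        mul_le_mul_of_nonneg_left h hpos.le
    _ = (2:ℝ) ^ (2 - θ) / (1 - θ) * |z₂ - z₁| ^ θ := by ring
end

section
/- Let −2 ≤ c ≤ 0 ≤ d ≤ 2 be real numbers. Then 16 + (d+2)² ≤ (d−c)² + (2−c)² + 2·√(16 − (d−c)²)·√(16 − (2−c)²). -/
/-- For `−2 ≤ c ≤ 0 ≤ d ≤ 2`,
`16 + (d+2)² ≤ (d−c)² + (2−c)² + 2√(16−(d−c)²)·√(16−(2−c)²)`. -/
theorem key_inequality
    (c d : ℝ) (hc : -2 ≤ c) (hc0 : c ≤ 0) (hd0 : 0 ≤ d) (hd : d ≤ 2) :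
    16 + (d + 2) ^ 2 ≤
      (d - c) ^ 2 + (2 - c) ^ 2 +
        2 * Real.sqrt (16 - (d - c) ^ 2) * Real.sqrt (16 - (2 - c) ^ 2) := by
  set a := Real.sqrt (16 - (d - c) ^ 2) with ha
  set b := Real.sqrt (16 - (2 - c) ^ 2) with hb
  have h1 : 0 ≤ 16 - (d - c) ^ 2 := by nlinarith
  have h2 : 0 ≤ 16 - (2 - c) ^ 2 := by nlinarith
  have ha2 : a ^ 2 = 16 - (d - c) ^ 2 := Real.sq_sqrt h1
  have hb2 : b ^ 2 = 16 - (2 - c) ^ 2 := Real.sq_sqrt h2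
  have han : 0 ≤ a := Real.sqrt_nonneg _
  have hbn : 0 ≤ b := Real.sqrt_nonneg _
  have key : 16 + (d + 2) ^ 2 - (d - c) ^ 2 - (2 - c) ^ 2 ≤ 2 * (a * b) := by
    rcases le_or_gt (16 + (d + 2) ^ 2 - (d - c) ^ 2 - (2 - c) ^ 2) 0 with h | h
    · exact h.trans (by positivity)
    · have hE : (0:ℝ) ≤ 32 * (2 - d) * (2 + c) * (4 - c + d) := by
        have := mul_nonneg (mul_nonneg (mul_nonneg (by norm_num : (0:ℝ) ≤ 32)
          (by linarith : (0:ℝ) ≤ 2 - d)) (by linarith : (0:ℝ) ≤ 2 + c))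
          (by linarith : (0:ℝ) ≤ 4 - c + d)
        linarith
      have hsq : (16 + (d + 2) ^ 2 - (d - c) ^ 2 - (2 - c) ^ 2) ^ 2 ≤ (2 * (a * b)) ^ 2 := by
        have habsq : (a * b) ^ 2 = (16 - (d - c) ^ 2) * (16 - (2 - c) ^ 2) := by
          rw [mul_pow, ha2, hb2]
        nlinarith [hE, habsq]
      exact le_of_pow_le_pow_left₀ (by norm_num) (by positivity) hsq
  linarith
end

section
/- Let d ∈ [0,2] be fixed. Then the function c ↦ (d−c)² + (2−c)² + 2·√(16 − (d−c)²)·√(16 − (2−c)²) is monotone increasing on the interval [−2, 0]. -/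
set_option maxHeartbeats 1000000


/-- For fixed `d ∈ [0,2]`, the function
`c ↦ (d−c)² + (2−c)² + 2√(16−(d−c)²)·√(16−(2−c)²)` is monotone increasing on `[−2,0]`. -/
theorem rhs_monotone (d : ℝ) (hd : d ∈ Set.Icc (0:ℝ) 2) :
    MonotoneOn
      (fun c : ℝ => (d - c) ^ 2 + (2 - c) ^ 2 +
        2 * Real.sqrt (16 - (d - c) ^ 2) * Real.sqrt (16 - (2 - c) ^ 2))
      (Set.Icc (-2:ℝ) 0) := by
  obtain ⟨hd0, hd2⟩ := hd
  rintro c₁ ⟨h1l, h1r⟩ c₂ ⟨h2l, h2r⟩ h12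
  simp only
  have hA1 : (0:ℝ) ≤ 16 - (d - c₁) ^ 2 := by nlinarith
  have hB1 : (0:ℝ) ≤ 16 - (2 - c₁) ^ 2 := by nlinarith
  have hA2 : (0:ℝ) ≤ 16 - (d - c₂) ^ 2 := by nlinarith
  have hB2 : (0:ℝ) ≤ 16 - (2 - c₂) ^ 2 := by nlinarith
  set a₁ := Real.sqrt (16 - (d - c₁) ^ 2) with ha₁
  set b₁ := Real.sqrt (16 - (2 - c₁) ^ 2) with hb₁
  set a₂ := Real.sqrt (16 - (d - c₂) ^ 2) with ha₂
  set b₂ := Real.sqrt (16 - (2 - c₂) ^ 2) with hb₂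
  have ha₁sq : a₁ ^ 2 = 16 - (d - c₁) ^ 2 := Real.sq_sqrt hA1
  have hb₁sq : b₁ ^ 2 = 16 - (2 - c₁) ^ 2 := Real.sq_sqrt hB1
  have ha₂sq : a₂ ^ 2 = 16 - (d - c₂) ^ 2 := Real.sq_sqrt hA2
  have hb₂sq : b₂ ^ 2 = 16 - (2 - c₂) ^ 2 := Real.sq_sqrt hB2
  have ha₁nn : 0 ≤ a₁ := Real.sqrt_nonneg _
  have hb₁nn : 0 ≤ b₁ := Real.sqrt_nonneg _
  have ha₂nn : 0 ≤ a₂ := Real.sqrt_nonneg _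
  have hb₂nn : 0 ≤ b₂ := Real.sqrt_nonneg _
  -- b ≤ a pointwise since (2-c)² ≥ (d-c)²
  have hba1 : b₁ ≤ a₁ := Real.sqrt_le_sqrt (by nlinarith)
  have hba2 : b₂ ≤ a₂ := Real.sqrt_le_sqrt (by nlinarith)
  -- monotonicity in c
  have ha12 : a₁ ≤ a₂ := Real.sqrt_le_sqrt (by nlinarith)
  have hb12 : b₁ ≤ b₂ := Real.sqrt_le_sqrt (by nlinarith)
  -- products
  have hprod1 : (a₁ - b₁) * (a₁ + b₁) = (2 - c₁) ^ 2 - (d - c₁) ^ 2 := by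
    have : (a₁ - b₁) * (a₁ + b₁) = a₁ ^ 2 - b₁ ^ 2 := by ring
    rw [this, ha₁sq, hb₁sq]; ring
  have hprod2 : (a₂ - b₂) * (a₂ + b₂) = (2 - c₂) ^ 2 - (d - c₂) ^ 2 := by
    have : (a₂ - b₂) * (a₂ + b₂) = a₂ ^ 2 - b₂ ^ 2 := by ring
    rw [this, ha₂sq, hb₂sq]; ring
  have hdiff : (2 - c₂) ^ 2 - (d - c₂) ^ 2 ≤ (2 - c₁) ^ 2 - (d - c₁) ^ 2 := by nlinarith
  -- key: a₂ - b₂ ≤ a₁ - b₁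
  have hkey : a₂ - b₂ ≤ a₁ - b₁ := by
    rcases eq_or_lt_of_le (by linarith : (0:ℝ) ≤ a₂ + b₂) with hs | hs
    · have ha₂0 : a₂ = 0 := by linarith
      have hb₂0 : b₂ = 0 := by linarith
      have ha₁0 : a₁ = 0 := le_antisymm (by linarith) ha₁nn
      have hb₁0 : b₁ = 0 := le_antisymm (by linarith) hb₁nn
      rw [ha₁0, hb₁0, ha₂0, hb₂0]
    · have h1 : (a₂ - b₂) * (a₂ + b₂) ≤ (a₁ - b₁) * (a₁ + b₁) := by
        rw [hprod1, hprod2]; exact hdiff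
      have h2 : (a₁ - b₁) * (a₁ + b₁) ≤ (a₁ - b₁) * (a₂ + b₂) :=
        mul_le_mul_of_nonneg_left (by linarith) (by linarith)
      exact le_of_mul_le_mul_right (by linarith) hs
  have hnn2 : 0 ≤ a₂ - b₂ := by linarith
  -- rewrite both sides as 32 - (a - b)²
  have hrw1 : (d - c₁) ^ 2 + (2 - c₁) ^ 2 + 2 * a₁ * b₁ = 32 - (a₁ - b₁) ^ 2 := by
    nlinarith [ha₁sq, hb₁sq]
  have hrw2 : (d - c₂) ^ 2 + (2 - c₂) ^ 2 + 2 * a₂ * b₂ = 32 - (a₂ - b₂) ^ 2 := by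
    nlinarith [ha₂sq, hb₂sq]
  rw [hrw1, hrw2]
  nlinarith [hkey, hnn2]
end
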